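/- Let Y, Y' : [0,T] → ℝ be continuous, S : [0,T] → ℝ continuous, and K, K' : [0,T] → ℝ continuous nondecreasing with K(0)=K'(0)=0, such that Y(t) ≥ S(t), Y'(t) ≥ S(t) for all t, the measure dK is supported on {t : Y(t) = S(t)}, and dK' is supported on {t : Y'(t) = S(t)}. Then for any nonnegative continuous weight w : [0,T] → ℝ, ∫₀ᵀ w(s)(Y(s) − Y'(s)) d(K − K')(s) ≤ 0. -/

import Mathlib

/-! `K` charges only `{Y = S}`, where `Y - Y' = S - Y' ≤ 0`, and `K'` charges only `{Y' = S}`,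
where `Y - Y' = Y - S ≥ 0`; so against the nonnegative weight `w` the first integral is `≤ 0`
and the second is `≥ 0`. -/

open MeasureTheory

theorem ae_restrict_of_measure_setOf_not_inter_eq_zero {α : Type*} [MeasurableSpace α]
    {μ : Measure α} {s : Set α} {p : α → Prop} (hs : MeasurableSet s)
    (h : μ ({x | ¬ p x} ∩ s) = 0) : ∀ᵐ x ∂μ.restrict s, p x := by
  rwa [ae_iff, Measure.restrict_apply' hs]

theorem stmt_5_general (T : ℝ) (Y Y' S : ℝ → ℝ)
    (K K' : StieltjesFunction ℝ)
    (hYS : ∀ t ∈ Set.Icc 0 T, S t ≤ Y t) (hY'S : ∀ t ∈ Set.Icc 0 T, S t ≤ Y' t)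
    (hK_supp : K.measure ({t | Y t ≠ S t} ∩ Set.Icc 0 T) = 0)
    (hK'_supp : K'.measure ({t | Y' t ≠ S t} ∩ Set.Icc 0 T) = 0)
    (w : ℝ → ℝ) (hw_nonneg : ∀ t ∈ Set.Icc 0 T, 0 ≤ w t) :
    (∫ s in Set.Icc 0 T, w s * (Y s - Y' s) ∂K.measure)
      - (∫ s in Set.Icc 0 T, w s * (Y s - Y' s) ∂K'.measure) ≤ 0 := by
  have hK := ae_restrict_of_measure_setOf_not_inter_eq_zero measurableSet_Icc hK_supp
  have hK' := ae_restrict_of_measure_setOf_not_inter_eq_zero measurableSet_Icc hK'_supp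
  have hK_int : ∫ s in Set.Icc 0 T, w s * (Y s - Y' s) ∂K.measure ≤ 0 := by
    refine integral_nonpos_of_ae ?_
    filter_upwards [hK, ae_restrict_mem measurableSet_Icc] with t hYt ht
    exact mul_nonpos_of_nonneg_of_nonpos (hw_nonneg t ht) (by linarith [hY'S t ht])
  have hK'_int : 0 ≤ ∫ s in Set.Icc 0 T, w s * (Y s - Y' s) ∂K'.measure := by
    refine integral_nonneg_of_ae ?_
    filter_upwards [hK', ae_restrict_mem measurableSet_Icc] with t hY't ht
    exact mul_nonneg (hw_nonneg t ht) (by linarith [hYS t ht])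
  linarith

theorem stmt_5 (T : ℝ) (hT : 0 ≤ T) (Y Y' S : ℝ → ℝ)
    (hY : ContinuousOn Y (Set.Icc 0 T)) (hY' : ContinuousOn Y' (Set.Icc 0 T))
    (hS : ContinuousOn S (Set.Icc 0 T))
    (K K' : StieltjesFunction ℝ) (hKc : Continuous K) (hK'c : Continuous K')
    (hK0 : K 0 = 0) (hK'0 : K' 0 = 0)
    (hYS : ∀ t ∈ Set.Icc 0 T, S t ≤ Y t) (hY'S : ∀ t ∈ Set.Icc 0 T, S t ≤ Y' t)
    (hK_supp : K.measure ({t | Y t ≠ S t} ∩ Set.Icc 0 T) = 0)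
    (hK'_supp : K'.measure ({t | Y' t ≠ S t} ∩ Set.Icc 0 T) = 0)
    (w : ℝ → ℝ) (hw : ContinuousOn w (Set.Icc 0 T)) (hw_nonneg : ∀ t ∈ Set.Icc 0 T, 0 ≤ w t) :
    (∫ s in Set.Icc 0 T, w s * (Y s - Y' s) ∂K.measure)
      - (∫ s in Set.Icc 0 T, w s * (Y s - Y' s) ∂K'.measure) ≤ 0 :=
  stmt_5_general T Y Y' S K K' hYS hY'S hK_supp hK'_supp w hw_nonneg
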